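/- If the weight sequence (ω_n)_{n≥0} of a unilateral weighted shift S is periodic with period k, then (ω_0⋯ω_{k-1})^{-1} S^k is an isometry; consequently S possesses Bishop's property (β). -/

import Mathlib

/-!
Periodicity makes `S ^ k` send `e m` to `c • e (m + k)` with `c = ω 0 ⋯ ω (k-1)`, so `c⁻¹ • S ^ k`
is an isometry. With `r = c ^ (1/k)`, factoring `z ^ k - S ^ k` through `z - S` shows that
`‖(S - z) x‖ ≥ D⁻¹ |r - |z|| ‖x‖`, locally uniformly in `z`. Away from the circle `|z| = r` this
bounds `h z` by `(S - z) (h z)` directly. Near it, multiply `h` by a polynomial `Q` that equals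
`(z - z₀) (|z|² - r²)` on the circle `|z - z₀| = δ` and has `Q z₀ = z₀ δ²`; the maximum principle
for `Q • h` then bounds `h z₀`. Such locally uniform bounds give property (β).
-/

open Filter

section Defs

variable {X : Type*} [NormedAddCommGroup X] [NormedSpace ℂ X]

/-- `T` possesses Bishop's property (β). -/
def HasBishopBeta (T : X →L[ℂ] X) : Prop :=
  ∀ U : Set ℂ, IsOpen U →
    ∀ f : ℕ → ℂ → X, (∀ n, AnalyticOnNhd ℂ (f n) U) →
      (∀ K : Set ℂ, K ⊆ U → IsCompact K →
        TendstoUniformlyOn (fun n z => (T - z • (1 : X →L[ℂ] X)) (f n z)) 0 atTop K) →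
      ∀ K : Set ℂ, K ⊆ U → IsCompact K →
        TendstoUniformlyOn (fun n z => f n z) 0 atTop K

end Defs

variable {H : Type*} [NormedAddCommGroup H] [InnerProductSpace ℂ H] [CompleteSpace H]

open Metric Finset ComplexConjugate

theorem Function.Periodic.prod_range_add {M : Type*} [CommMonoid M] {ω : ℕ → M} {k : ℕ}
    (hω : Function.Periodic ω k) (m : ℕ) :
    ∏ i ∈ range k, ω (m + i) = ∏ i ∈ range k, ω i := by
  induction m with
  | zero => simp
  | succ m ih =>
    rw [← ih]
    cases k with
    | zero => simp
    | succ j =>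
      have hwrap : ω (m + 1 + j) = ω m := by
        rw [show m + 1 + j = m + (j + 1) by omega]; exact hω m
      rw [prod_range_succ, prod_range_succ', hwrap, add_zero]
      simp only [add_assoc, Nat.add_comm 1]

theorem ContinuousLinearMap.pow_apply_eq_prod_smul_of_apply_eq_smul {R M : Type*}
    [CommSemiring R] [TopologicalSpace M] [AddCommMonoid M] [Module R M] (S : M →L[R] M)
    {e : ℕ → M} {w : ℕ → R} (hS : ∀ n, S (e n) = w n • e (n + 1)) (j m : ℕ) :
    (S ^ j) (e m) = (∏ i ∈ range j, w (m + i)) • e (m + j) := by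
  induction j generalizing m with
  | zero => simp
  | succ j ih =>
    rw [pow_succ, mul_apply_eq_comp, hS, map_smul, ih, smul_smul, prod_range_succ', add_zero,
      mul_comm]
    simp only [add_assoc, Nat.add_comm 1]

theorem HilbertBasis.isometry_of_orthonormal_comp {ι 𝕜 E F : Type*} [RCLike 𝕜]
    [NormedAddCommGroup E] [InnerProductSpace 𝕜 E] [CompleteSpace E]
    [NormedAddCommGroup F] [InnerProductSpace 𝕜 F] [CompleteSpace F]
    (e : HilbertBasis ι 𝕜 E) (V : E →L[𝕜] F) (hV : Orthonormal 𝕜 (V ∘ e)) : Isometry V := by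
  classical
  rw [V.isometry_iff_adjoint_comp_self]
  refine ContinuousLinearMap.ext_on
    (Submodule.dense_iff_topologicalClosure_eq_top.mpr e.dense_span) ?_
  rintro _ ⟨n, rfl⟩
  refine e.repr.injective (lp.ext (funext fun i => ?_))
  simp only [e.repr_apply_apply, ContinuousLinearMap.comp_apply,
    ContinuousLinearMap.adjoint_inner_right, one_apply_eq_self]
  exact (orthonormal_iff_ite.mp hV i n).trans (orthonormal_iff_ite.mp e.orthonormal i n).symm

theorem isometry_inv_prod_smul_pow_of_periodic {𝕜 E : Type*} [RCLike 𝕜]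
    [NormedAddCommGroup E] [InnerProductSpace 𝕜 E] [CompleteSpace E]
    (S : E →L[𝕜] E) (e : HilbertBasis ℕ 𝕜 E) {w : ℕ → 𝕜}
    (hS : ∀ n, S (e n) = w n • e (n + 1)) {k : ℕ} (hw : Function.Periodic w k)
    (hw₀ : ∏ i ∈ range k, w i ≠ 0) :
    Isometry ⇑((∏ i ∈ range k, w i)⁻¹ • S ^ k) := by
  refine e.isometry_of_orthonormal_comp _ ?_
  have hshift : ((∏ i ∈ range k, w i)⁻¹ • S ^ k) ∘ e = e ∘ (· + k) := by
    funext m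
    simp only [Function.comp_apply, smul_apply, S.pow_apply_eq_prod_smul_of_apply_eq_smul hS,
      hw.prod_range_add, smul_smul, inv_mul_cancel₀ hw₀, one_smul]
  rw [hshift]
  exact e.orthonormal.comp _ (add_left_injective k)

theorem pow_sub_one_mul_abs_sub_le_abs_pow_sub_pow {r s : ℝ} (hr : 0 ≤ r) (hs : 0 ≤ s) {k : ℕ}
    (hk : 0 < k) : r ^ (k - 1) * |r - s| ≤ |r ^ k - s ^ k| := by
  have hsum : r ^ (k - 1) ≤ ∑ i ∈ range k, r ^ i * s ^ (k - 1 - i) := by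
    simpa using single_le_sum (f := fun i => r ^ i * s ^ (k - 1 - i))
      (fun i _ => by positivity) (mem_range.mpr (Nat.sub_lt hk one_pos))
  have hsum_nonneg : 0 ≤ ∑ i ∈ range k, r ^ i * s ^ (k - 1 - i) :=
    sum_nonneg fun i _ => by positivity
  rw [← geom_sum₂_mul, abs_mul, abs_of_nonneg hsum_nonneg]
  gcongr

section BishopBeta

variable {X : Type*} [NormedAddCommGroup X] [NormedSpace ℂ X]

theorem ContinuousLinearMap.exists_norm_pow_smul_sub_pow_apply_le (T : X →L[ℂ] X) (k : ℕ)
    (R : ℝ) : ∃ D, 0 ≤ D ∧ ∀ z : ℂ, ‖z‖ ≤ R → ∀ x,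
      ‖z ^ k • x - (T ^ k) x‖ ≤ D * ‖(T - z • 1) x‖ := by
  set P : ℂ → X →L[ℂ] X := fun z => ∑ i ∈ range k, (z • 1) ^ i * T ^ (k - 1 - i)
  have hP : Continuous P := by fun_prop
  obtain ⟨D, hD⟩ := (isCompact_closedBall (0 : ℂ) R).exists_bound_of_continuousOn hP.continuousOn
  refine ⟨max D 0, le_max_right _ _, fun z hz x => ?_⟩
  have hfactor : z ^ k • x - (T ^ k) x = P z ((z • 1 - T) x) := by
    rw [← mul_apply_eq_comp, ((Commute.one_left T).smul_left z).geom_sum₂_mul, sub_apply,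
      smul_pow, one_pow]
    rfl
  rw [hfactor, ← neg_sub T, neg_apply, map_neg, norm_neg]
  calc ‖P z ((T - z • 1) x)‖ ≤ ‖P z‖ * ‖(T - z • 1) x‖ := (P z).le_opNorm _
    _ ≤ max D 0 * ‖(T - z • 1) x‖ := by
      gcongr
      exact (hD z (mem_closedBall_zero_iff.mpr hz)).trans (le_max_left _ _)

theorem ContinuousLinearMap.exists_abs_sub_mul_norm_le_of_norm_pow_apply (T : X →L[ℂ] X)
    {k : ℕ} (hk : 0 < k) {r : ℝ} (hr : 0 < r) (hT : ∀ x, ‖(T ^ k) x‖ = r ^ k * ‖x‖) (R : ℝ) :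
    ∃ D, 0 ≤ D ∧ ∀ z : ℂ, ‖z‖ ≤ R → ∀ x, |r - ‖z‖| * ‖x‖ ≤ D * ‖(T - z • 1) x‖ := by
  obtain ⟨D, hD, hbound⟩ := T.exists_norm_pow_smul_sub_pow_apply_le k R
  refine ⟨D / r ^ (k - 1), by positivity, fun z hz x => ?_⟩
  rw [div_mul_eq_mul_div, le_div_iff₀ (by positivity)]
  calc |r - ‖z‖| * ‖x‖ * r ^ (k - 1) = r ^ (k - 1) * |r - ‖z‖| * ‖x‖ := by ring
    _ ≤ |r ^ k - ‖z‖ ^ k| * ‖x‖ := by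
      gcongr
      exact pow_sub_one_mul_abs_sub_le_abs_pow_sub_pow hr.le (norm_nonneg z) hk
    _ = |‖(T ^ k) x‖ - ‖z ^ k • x‖| := by
      rw [hT, norm_smul, norm_pow, ← sub_mul, abs_mul, abs_norm]
    _ ≤ ‖z ^ k • x - (T ^ k) x‖ := by
      rw [norm_sub_rev]; exact abs_norm_sub_norm_le _ _
    _ ≤ D * ‖(T - z • 1) x‖ := hbound z hz x

theorem hasBishopBeta_of_forall_isCompact_norm_le (T : X →L[ℂ] X)
    (hT : ∀ U : Set ℂ, IsOpen U → ∀ K ⊆ U, IsCompact K → ∃ K' ⊆ U, IsCompact K' ∧ ∃ C, 0 ≤ C ∧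
      ∀ h : ℂ → X, DifferentiableOn ℂ h U → ∀ ε, (∀ z ∈ K', ‖(T - z • 1) (h z)‖ ≤ ε) →
        ∀ z ∈ K, ‖h z‖ ≤ C * ε) :
    HasBishopBeta T := by
  intro U hU f hf hTf K hKU hK
  obtain ⟨K', hK'U, hK', C, hC, hest⟩ := hT U hU K hKU hK
  have hTfK' := Metric.tendstoUniformlyOn_iff.mp (hTf K' hK'U hK')
  rw [Metric.tendstoUniformlyOn_iff]
  intro ε hε
  have hε' : 0 < ε / (C + 1) := by positivity
  filter_upwards [hTfK' _ hε'] with n hn z hz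
  have hbound := hest (f n) (hf n).differentiableOn (ε / (C + 1))
    (fun w hw => by simpa [dist_eq_norm'] using (hn w hw).le) z hz
  rw [Pi.zero_apply, dist_zero_left]
  calc ‖f n z‖ ≤ C * (ε / (C + 1)) := hbound
    _ < (C + 1) * (ε / (C + 1)) := by gcongr; linarith
    _ = ε := mul_div_cancel₀ _ (by positivity)

theorem norm_mul_mul_norm_le_of_forall_mem_sphere {h : ℂ → X} {z₀ : ℂ} {δ r M : ℝ}
    (hδ : 0 < δ) (hh : DiffContOnCl ℂ h (ball z₀ δ))
    (hM : ∀ z ∈ sphere z₀ δ, |‖z‖ ^ 2 - r ^ 2| * ‖h z‖ ≤ M) :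
    ‖z₀‖ * δ * ‖h z₀‖ ≤ M := by
  -- On the circle `conj z = conj z₀ + δ² / (z - z₀)`, so `(z - z₀) (|z|² - r²)` agrees there
  -- with the polynomial `Q` below, while `Q z₀ = z₀ δ²`.
  set Q : ℂ → ℂ := fun z => conj z₀ * (z - z₀) ^ 2 + ((‖z₀‖ ^ 2 + δ ^ 2 - r ^ 2 : ℝ) : ℂ) * (z - z₀)
    + z₀ * ((δ ^ 2 : ℝ) : ℂ)
  have hQ_sphere : ∀ z ∈ sphere z₀ δ, Q z = (z - z₀) * ((‖z‖ ^ 2 - r ^ 2 : ℝ) : ℂ) := by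
    intro z hz
    have hzd : (z - z₀) * conj (z - z₀) = ((δ ^ 2 : ℝ) : ℂ) := by
      rw [Complex.mul_conj, Complex.normSq_eq_norm_sq, mem_sphere_iff_norm.mp hz]
    have hz₀ : z₀ * conj z₀ = ((‖z₀‖ ^ 2 : ℝ) : ℂ) := by
      rw [Complex.mul_conj, Complex.normSq_eq_norm_sq]
    have hz' : z * conj z = ((‖z‖ ^ 2 : ℝ) : ℂ) := by
      rw [Complex.mul_conj, Complex.normSq_eq_norm_sq]
    rw [map_sub] at hzd
    simp only [Q]
    push_cast at hzd hz₀ hz' ⊢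
    linear_combination (-z) * hzd - (z - z₀) * hz₀ + (z - z₀) * hz'
  have hF : DiffContOnCl ℂ (fun z => Q z • h z) (ball z₀ δ) :=
    (Differentiable.diffContOnCl (by fun_prop)).smul hh
  have hmax := Complex.norm_le_of_forall_mem_frontier_norm_le isBounded_ball hF
    (C := δ * M) (fun z hz => ?_) (subset_closure (mem_ball_self hδ))
  · have hQ₀ : Q z₀ = z₀ * ((δ ^ 2 : ℝ) : ℂ) := by simp [Q]
    rw [norm_smul, hQ₀, norm_mul, Complex.norm_real, Real.norm_of_nonneg (by positivity)] at hmax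
    nlinarith
  · rw [frontier_ball z₀ hδ.ne'] at hz
    rw [norm_smul, hQ_sphere z hz, norm_mul, mem_sphere_iff_norm.mp hz, Complex.norm_real,
      Real.norm_eq_abs, mul_assoc]
    exact mul_le_mul_of_nonneg_left (hM z hz) hδ.le

theorem ContinuousLinearMap.norm_apply_le_of_abs_sub_mul_norm_le (T : X →L[ℂ] X)
    {r R D δ ε : ℝ} {z₀ : ℂ} (hr : 0 < r) (hD : 0 ≤ D) (hδ : 0 < δ)
    (hR : ∀ z ∈ closedBall z₀ δ, ‖z‖ ≤ R)
    (hT : ∀ z ∈ closedBall z₀ δ, ∀ x, |r - ‖z‖| * ‖x‖ ≤ D * ‖(T - z • 1) x‖)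
    {h : ℂ → X} (hh : DiffContOnCl ℂ h (ball z₀ δ))
    (hε : ∀ z ∈ closedBall z₀ δ, ‖(T - z • 1) (h z)‖ ≤ ε) :
    ‖h z₀‖ ≤ 2 * D * (1 + (R + r) / δ) / r * ε := by
  have hbelow : ∀ z ∈ closedBall z₀ δ, |r - ‖z‖| * ‖h z‖ ≤ D * ε := fun z hz =>
    (hT z hz (h z)).trans (mul_le_mul_of_nonneg_left (hε z hz) hD)
  have hz₀ : z₀ ∈ closedBall z₀ δ := mem_closedBall_self hδ.le
  have hε₀ : 0 ≤ ε := (norm_nonneg _).trans (hε z₀ hz₀)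
  have hsplit : 2 * D * (1 + (R + r) / δ) / r * ε
      = 2 * D * ε / r + 2 * (R + r) * (D * ε) / (r * δ) := by
    field_simp
  rw [hsplit]
  rcases le_or_gt ‖z₀‖ (r / 2) with hsmall | hlarge
  · have hfar : r / 2 ≤ |r - ‖z₀‖| := by
      rw [abs_of_nonneg (by linarith)]; linarith
    have : ‖h z₀‖ ≤ 2 * D * ε / r := by
      rw [le_div_iff₀ hr]
      nlinarith [hbelow z₀ hz₀, norm_nonneg (h z₀)]
    have : 0 ≤ 2 * (R + r) * (D * ε) / (r * δ) := by
      have := (norm_nonneg z₀).trans (hR z₀ hz₀)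
      positivity
    linarith
  · have hcircle : ∀ z ∈ sphere z₀ δ, |‖z‖ ^ 2 - r ^ 2| * ‖h z‖ ≤ (R + r) * (D * ε) := by
      intro z hz
      have hz' := sphere_subset_closedBall hz
      rw [show ‖z‖ ^ 2 - r ^ 2 = (‖z‖ + r) * -(r - ‖z‖) by ring, abs_mul, abs_neg,
        abs_of_nonneg (by positivity), mul_assoc]
      exact mul_le_mul (by linarith [hR z hz']) (hbelow z hz') (by positivity)
        (by linarith [(norm_nonneg z).trans (hR z hz')])
    have hmax := norm_mul_mul_norm_le_of_forall_mem_sphere hδ hh hcircle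
    have : ‖h z₀‖ ≤ 2 * (R + r) * (D * ε) / (r * δ) := by
      rw [le_div_iff₀ (by positivity)]
      nlinarith [mul_le_mul_of_nonneg_right hlarge.le (mul_nonneg hδ.le (norm_nonneg (h z₀)))]
    have : 0 ≤ 2 * D * ε / r := by positivity
    linarith

theorem hasBishopBeta_of_abs_sub_mul_norm_le (T : X →L[ℂ] X) {r : ℝ}
    (hr : 0 < r) (hT : ∀ R, ∃ D, 0 ≤ D ∧ ∀ z : ℂ, ‖z‖ ≤ R → ∀ x,
      |r - ‖z‖| * ‖x‖ ≤ D * ‖(T - z • 1) x‖) :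
    HasBishopBeta T := by
  refine hasBishopBeta_of_forall_isCompact_norm_le T fun U hU K hKU hK => ?_
  obtain ⟨δ, hδ, hKδU⟩ := hK.exists_cthickening_subset_open hU hKU
  obtain ⟨R, hR₀, hR⟩ := (hK.cthickening (r := δ)).isBounded.exists_pos_norm_le
  obtain ⟨D, hD, hTD⟩ := hT R
  refine ⟨_, hKδU, hK.cthickening, 2 * D * (1 + (R + r) / δ) / r, by positivity,
    fun h hh ε hε z₀ hz₀ => ?_⟩
  have hball : closedBall z₀ δ ⊆ cthickening δ K := closedBall_subset_cthickening hz₀ δ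
  exact T.norm_apply_le_of_abs_sub_mul_norm_le hr hD hδ (fun z hz => hR z (hball hz))
    (fun z hz => hTD z (hR z (hball hz))) (hh.diffContOnCl_ball (hball.trans hKδU))
    (fun z hz => hε z (hball hz))

theorem hasBishopBeta_of_isometry_inv_smul_pow (T : X →L[ℂ] X) {k : ℕ}
    (hk : 0 < k) {c : ℝ} (hc : 0 < c) (hT : Isometry ⇑((c : ℂ)⁻¹ • T ^ k)) :
    HasBishopBeta T := by
  set r := c ^ (k⁻¹ : ℝ)
  have hr : 0 < r := Real.rpow_pos_of_pos hc _
  have hnorm : ∀ x, ‖(T ^ k) x‖ = r ^ k * ‖x‖ := by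
    intro x
    have hx := (AddMonoidHomClass.isometry_iff_norm _).mp hT x
    rw [smul_apply, norm_smul, norm_inv, Complex.norm_real, Real.norm_of_nonneg hc.le,
      inv_mul_eq_iff_eq_mul₀ hc.ne'] at hx
    rw [hx, Real.rpow_inv_natCast_pow hc.le hk.ne']
  exact hasBishopBeta_of_abs_sub_mul_norm_le T hr
    (T.exists_abs_sub_mul_norm_le_of_norm_pow_apply hk hr hnorm)

end BishopBeta

/-- If the weight sequence of a unilateral weighted shift `S` is periodic with period `k`,
then `(ω 0 ⋯ ω (k-1))⁻¹ • S ^ k` is an isometry; consequently `S` possesses Bishop's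
property (β). -/
theorem periodic_weights_bishopBeta (S : H →L[ℂ] H)
    (e : HilbertBasis ℕ ℂ H) (ω : ℕ → ℝ) (hpos : ∀ n, 0 < ω n)
    (hS : ∀ n, S (e n) = (ω n : ℂ) • e (n + 1))
    (k : ℕ) (hk : 0 < k) (hper : ∀ n, ω (n + k) = ω n) :
    Isometry ⇑((((∏ i ∈ Finset.range k, ω i : ℝ) : ℂ)⁻¹ • S ^ k)) ∧
    HasBishopBeta S := by
  have hc : 0 < ∏ i ∈ Finset.range k, ω i := Finset.prod_pos fun i _ => hpos i
  have hiso : Isometry ⇑((((∏ i ∈ Finset.range k, ω i : ℝ) : ℂ)⁻¹ • S ^ k)) := by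
    rw [Complex.ofReal_prod]
    exact isometry_inv_prod_smul_pow_of_periodic S e (w := fun n => (ω n : ℂ)) hS
      (Function.Periodic.comp hper ((↑) : ℝ → ℂ)) (by exact_mod_cast hc.ne')
  exact ⟨hiso, hasBishopBeta_of_isometry_inv_smul_pow S hk hc hiso⟩
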